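/- arXiv:2212.06631 — 4 statements merged into one kernel-verified Lean document; each statement's English description precedes it below -/
import Mathlib

section
/- For matrices J, R ∈ ℂ^{n×n} with R Hermitian positive semi-definite and J skew-Hermitian, and m ∈ ℕ, the condition ∑_{j=0}^m J^j R (J^H)^j > 0 (positive definite) holds if and only if the Kalman rank condition rank[R, JR, ..., J^m R] = n holds. -/
/-!
Every summand `J ^ j * R * (J ^ j)ᴴ` is positive semidefinite, so the sum is positive definite
iff the summands have no common nonzero kernel vector. Since `R` is positive semidefinite,
`x` lies in the kernel of `J ^ j * R * (J ^ j)ᴴ` iff `R * (J ^ j)ᴴ *ᵥ x = 0`, i.e. iff `x` is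
orthogonal to the columns of `J ^ j * R`. The Kalman matrix has rank `n` iff no nonzero `x` is
orthogonal to all of its columns.
-/

open scoped Matrix ComplexOrder

namespace Matrix

variable {m n 𝕜 : Type*} [Fintype n] [RCLike 𝕜]

theorem PosSemidef.posDef_iff_mulVec_eq_zero [DecidableEq n] {M : Matrix n n 𝕜}
    (hM : M.PosSemidef) : M.PosDef ↔ ∀ x, M *ᵥ x = 0 → x = 0 := by
  rw [hM.posDef_iff_isUnit, ← mulVec_injective_iff_isUnit]
  exact injective_iff_map_eq_zero M.mulVecLin

theorem sum_mulVec_eq_zero_iff_of_posSemidef {ι : Type*} {s : Finset ι}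
    {A : ι → Matrix n n 𝕜} (hA : ∀ i ∈ s, (A i).PosSemidef) (x : n → 𝕜) :
    (∑ i ∈ s, A i) *ᵥ x = 0 ↔ ∀ i ∈ s, A i *ᵥ x = 0 := by
  rw [← (posSemidef_sum s hA).dotProduct_mulVec_zero_iff, sum_mulVec, dotProduct_sum,
    Finset.sum_eq_zero_iff_of_nonneg fun i hi => (hA i hi).dotProduct_mulVec_nonneg x]
  exact forall₂_congr fun i hi => (hA i hi).dotProduct_mulVec_zero_iff x

theorem PosSemidef.mul_mul_conjTranspose_mulVec_eq_zero_iff [Fintype m] {A : Matrix m m 𝕜}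
    (hA : A.PosSemidef) (B : Matrix n m 𝕜) (x : n → 𝕜) :
    (B * A * Bᴴ) *ᵥ x = 0 ↔ A *ᵥ (Bᴴ *ᵥ x) = 0 := by
  rw [← (hA.mul_mul_conjTranspose_same B).dotProduct_mulVec_zero_iff,
    ← hA.dotProduct_mulVec_zero_iff, ← mulVec_mulVec, ← mulVec_mulVec, dotProduct_mulVec,
    star_mulVec, conjTranspose_conjTranspose]

theorem rank_eq_card_iff_conjTranspose_mulVec_eq_zero [Fintype m] (K : Matrix m n 𝕜) :
    K.rank = Fintype.card m ↔ ∀ x, Kᴴ *ᵥ x = 0 → x = 0 := by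
  rw [← rank_conjTranspose, rank]
  change _ ↔ ∀ x, Kᴴ.mulVecLin x = 0 → x = 0
  rw [← injective_iff_map_eq_zero]
  have := LinearMap.finrank_range_add_finrank_ker Kᴴ.mulVecLin
  rw [Module.finrank_fintype_fun_eq_card] at this
  rw [← LinearMap.ker_eq_bot, ← Submodule.finrank_eq_zero]
  omega

theorem conjTranspose_of_mulVec_eq_zero_iff {ι k : Type*} [Fintype m] (B : ι → Matrix m k 𝕜)
    (x : m → 𝕜) :
    (of fun i (p : ι × k) => B p.1 i p.2)ᴴ *ᵥ x = 0 ↔ ∀ j, (B j)ᴴ *ᵥ x = 0 := by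
  simp only [funext_iff, Prod.forall]
  rfl

end Matrix

theorem stmt_0_general {n : ℕ} (J R : Matrix (Fin n) (Fin n) ℂ) (m : ℕ)
    (hR : R.PosSemidef) :
    (∑ j ∈ Finset.range (m + 1), J ^ j * R * (Jᴴ) ^ j).PosDef ↔
      (Matrix.of fun (i : Fin n) (p : Fin (m + 1) × Fin n) =>
        (J ^ (p.1 : ℕ) * R) i p.2).rank = n := by
  simp only [← Matrix.conjTranspose_pow]
  have hterm : ∀ j ∈ Finset.range (m + 1), (J ^ j * R * (J ^ j)ᴴ).PosSemidef :=
    fun j _ => hR.mul_mul_conjTranspose_same (J ^ j)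
  have hrank := Matrix.rank_eq_card_iff_conjTranspose_mulVec_eq_zero
    (Matrix.of fun (i : Fin n) (p : Fin (m + 1) × Fin n) => (J ^ (p.1 : ℕ) * R) i p.2)
  rw [Fintype.card_fin] at hrank
  rw [hrank, (Matrix.posSemidef_sum _ hterm).posDef_iff_mulVec_eq_zero]
  refine forall_congr' fun x => imp_congr_left ?_
  rw [Matrix.sum_mulVec_eq_zero_iff_of_posSemidef hterm,
    Matrix.conjTranspose_of_mulVec_eq_zero_iff fun j : Fin (m + 1) => J ^ (j : ℕ) * R,
    Fin.forall_iff]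
  simp only [Finset.mem_range]
  refine forall₂_congr fun j _ => ?_
  rw [hR.mul_mul_conjTranspose_mulVec_eq_zero_iff, Matrix.conjTranspose_mul,
    hR.isHermitian.eq, Matrix.mulVec_mulVec]

/-- Lemma 2.2 (B3) ↔ (B1): for `R` Hermitian positive semi-definite and `J`
skew-Hermitian, `∑_{j=0}^m J^j R (Jᴴ)^j` is positive definite iff the Kalman
rank condition `rank [R, JR, …, J^m R] = n` holds. -/
theorem stmt_0 {n : ℕ} (J R : Matrix (Fin n) (Fin n) ℂ) (m : ℕ)
    (hR : R.PosSemidef) (hJ : Jᴴ = -J) :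
    (∑ j ∈ Finset.range (m + 1), J ^ j * R * (Jᴴ) ^ j).PosDef ↔
      (Matrix.of fun (i : Fin n) (p : Fin (m + 1) × Fin n) =>
        (J ^ (p.1 : ℕ) * R) i p.2).rank = n :=
  stmt_0_general J R m hR
end

section
/- For matrices J, R ∈ ℂ^{n×n} with R Hermitian positive semi-definite and J skew-Hermitian, and m ∈ ℕ, the condition ∑_{j=0}^m J^j R (J^H)^j > 0 holds if and only if ⋂_{j=0}^m ker(R^{1/2} J^j) = {0}, where R^{1/2} is the positive semi-definite square root of R. -/
open scoped Matrix ComplexOrder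

/-- The square root of a positive semi-definite matrix, as defined in Mathlib (Dec 2024),
since removed from Mathlib. -/
noncomputable def Matrix.PosSemidef.sqrt {n 𝕜 : Type*} [Fintype n] [DecidableEq n] [RCLike 𝕜]
    {A : Matrix n n 𝕜} (hA : A.PosSemidef) : Matrix n n 𝕜 :=
  (hA.1.eigenvectorUnitary : Matrix n n 𝕜) *
    Matrix.diagonal (((↑) : ℝ → 𝕜) ∘ (√·) ∘ hA.1.eigenvalues) *
    (star hA.1.eigenvectorUnitary : Matrix n n 𝕜)

/-!
Writing `R = S * S` with `S = R^{1/2}` Hermitian, each summand is a Gram matrix,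
`J^j R (Jᴴ)^j = Bⱼᴴ Bⱼ` with `Bⱼ = S (Jᴴ)^j = ± S J^j`. For a sum of Gram matrices,
`xᴴ (∑ Bⱼᴴ Bⱼ) x = ∑ ‖Bⱼ x‖²`, so the sum is positive semi-definite, and it is definite
exactly when no nonzero `x` lies in every `ker Bⱼ`.
-/

namespace Matrix

variable {n 𝕜 : Type*} [Fintype n] [RCLike 𝕜]

namespace PosSemidef

section sqrt

variable [DecidableEq n] {A : Matrix n n 𝕜} (hA : A.PosSemidef)

lemma conjTranspose_sqrt : hA.sqrtᴴ = hA.sqrt := by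
  rw [sqrt, conjTranspose_mul, conjTranspose_mul, diagonal_conjTranspose, ← star_eq_conjTranspose,
    ← star_eq_conjTranspose, star_star, Matrix.mul_assoc]
  congr 3
  ext i
  simp

lemma sqrt_mul_self : hA.sqrt * hA.sqrt = A := by
  conv_rhs => rw [hA.1.spectral_theorem, Unitary.conjStarAlgAut_apply]
  simp only [sqrt, Matrix.mul_assoc]
  rw [← Matrix.mul_assoc (star (hA.1.eigenvectorUnitary : Matrix n n 𝕜)),
    Unitary.coe_star_mul_self, Matrix.one_mul, ← Matrix.mul_assoc (diagonal _),
    diagonal_mul_diagonal]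
  congr 3
  ext i
  simp only [Function.comp_apply, ← RCLike.ofReal_mul, Real.mul_self_sqrt (hA.eigenvalues_nonneg i)]

end sqrt

lemma posDef_iff_mulVec_eq_zero_s1 {A : Matrix n n 𝕜} (hA : A.PosSemidef) :
    A.PosDef ↔ ∀ x, A *ᵥ x = 0 → x = 0 := by
  refine ⟨fun hpd x hx => ?_, fun h => .of_dotProduct_mulVec_pos hA.1 fun x hx0 => ?_⟩
  · by_contra hx0
    simpa [hx] using hpd.dotProduct_mulVec_pos hx0
  · refine (hA.dotProduct_mulVec_nonneg x).lt_of_ne fun hzero => hx0 (h x ?_)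
    exact (hA.dotProduct_mulVec_zero_iff x).mp hzero.symm

end PosSemidef

variable {m ι : Type*} [Fintype m]

lemma posSemidef_sum_conjTranspose_mul_self (s : Finset ι) (B : ι → Matrix m n 𝕜) :
    (∑ j ∈ s, (B j)ᴴ * B j).PosSemidef :=
  posSemidef_sum s fun j _ => posSemidef_conjTranspose_mul_self (B j)

lemma sum_conjTranspose_mul_self_mulVec_eq_zero_iff (s : Finset ι) (B : ι → Matrix m n 𝕜)
    (x : n → 𝕜) :
    (∑ j ∈ s, (B j)ᴴ * B j) *ᵥ x = 0 ↔ ∀ j ∈ s, B j *ᵥ x = 0 := by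
  have hquad : ∀ j, star x ⬝ᵥ ((B j)ᴴ * B j) *ᵥ x = star (B j *ᵥ x) ⬝ᵥ B j *ᵥ x := fun j => by
    rw [← mulVec_mulVec, dotProduct_mulVec, vecMul_conjTranspose, star_star]
  rw [← (posSemidef_sum_conjTranspose_mul_self s B).dotProduct_mulVec_zero_iff, sum_mulVec,
    dotProduct_sum, Finset.sum_congr rfl fun j _ => hquad j,
    Finset.sum_eq_zero_iff_of_nonneg fun j _ => dotProduct_star_self_nonneg _]
  simp only [dotProduct_star_self_eq_zero]

lemma posDef_sum_conjTranspose_mul_self_iff (s : Finset ι) (B : ι → Matrix m n 𝕜) :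
    (∑ j ∈ s, (B j)ᴴ * B j).PosDef ↔ ⨅ j ∈ s, LinearMap.ker (B j).mulVecLin = ⊥ := by
  simp only [(posSemidef_sum_conjTranspose_mul_self s B).posDef_iff_mulVec_eq_zero_s1,
    sum_conjTranspose_mul_self_mulVec_eq_zero_iff, Submodule.eq_bot_iff, Submodule.mem_iInf,
    LinearMap.mem_ker, mulVecLin_apply]

lemma ker_mulVecLin_mul_neg_pow [DecidableEq n] (A J : Matrix n n 𝕜) (j : ℕ) :
    LinearMap.ker (A * (-J) ^ j).mulVecLin = LinearMap.ker (A * J ^ j).mulVecLin := by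
  rcases Nat.even_or_odd j with h | h
  · rw [h.neg_pow]
  · ext x
    simp [h.neg_pow]

end Matrix

open Matrix

/-- Lemma 2.2 (B3) ↔ (B2): `∑_{j=0}^m J^j R (Jᴴ)^j > 0` iff
`⋂_{j=0}^m ker (R^{1/2} J^j) = {0}`. -/
theorem stmt_1 {n : ℕ} (J R : Matrix (Fin n) (Fin n) ℂ) (m : ℕ)
    (hR : R.PosSemidef) (hJ : Jᴴ = -J) :
    (∑ j ∈ Finset.range (m + 1), J ^ j * R * (Jᴴ) ^ j).PosDef ↔
      (⨅ j ∈ Finset.range (m + 1),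
        LinearMap.ker (Matrix.mulVecLin (hR.sqrt * J ^ j))) = ⊥ := by
  have hgram : ∀ j, J ^ j * R * Jᴴ ^ j = (hR.sqrt * Jᴴ ^ j)ᴴ * (hR.sqrt * Jᴴ ^ j) := fun j => by
    conv_lhs => rw [← hR.sqrt_mul_self]
    rw [conjTranspose_mul, conjTranspose_pow, conjTranspose_conjTranspose, hR.conjTranspose_sqrt]
    simp only [Matrix.mul_assoc]
  simp_rw [hgram, posDef_sum_conjTranspose_mul_self_iff, hJ, ker_mulVecLin_mul_neg_pow]
end

section
/- Let b₁ ≠ 0 and v ∈ H¹_{per}(𝕋) with ∫_𝕋 v dx₁ = 0. Then u(x,t) := (0, v(x₁ - b₁ t)) is a divergence-free zero-mean solution of the anisotropic Oseen-type equation u_t = -b·∇u + ν ∂²_{x₂} u (with p ≡ 0 and b = (b₁, b₂) constant), and ‖u(·,t)‖_{L²} = ‖u(·,0)‖_{L²} for all t ≥ 0; in particular the equation admits solutions whose L² norm does not decay. -/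
/-! A vertical shear flow `u(x,t) = (0, v(x₁ - b₁ t))` is transported along `x₁` and does not
depend on `x₂`, so it is divergence free, the drift `b₂ ∂₂` and the viscous term `ν ∂₂²` vanish
on it, and `u_t = -b₁ ∂₁ u` is the chain rule. Integrals over the periodicity cell only see the
profile `v` up to a translation, which periodicity absorbs: the mean and the energy are those
of `v` for all times. -/

open MeasureTheory

/-- The dot product on `ℝ × ℝ`. -/
def dot2 (a b : ℝ × ℝ) : ℝ := a.1 * b.1 + a.2 * b.2

/-- The periodicity cell `[0,2π]²` of the torus. -/
noncomputable def box : Set (ℝ × ℝ) :=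
  Set.Icc ((0 : ℝ), (0 : ℝ)) (2 * Real.pi, 2 * Real.pi)

def shearFlow (v : ℝ → ℝ) (c : ℝ) (x : ℝ × ℝ) : ℝ × ℝ := ((0 : ℝ), v (x.1 - c))

section ShearFlow

variable {v : ℝ → ℝ}

theorem hasFDerivAt_shearFlow {c : ℝ} {x : ℝ × ℝ} (hv : DifferentiableAt ℝ v (x.1 - c)) :
    HasFDerivAt (shearFlow v c)
      ((0 : (ℝ × ℝ) →L[ℝ] ℝ).prod (deriv v (x.1 - c) • ContinuousLinearMap.fst ℝ ℝ ℝ)) x :=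
  (hasFDerivAt_const (0 : ℝ) x).prodMk
    (hv.hasDerivAt.comp_hasFDerivAt x (hasFDerivAt_fst.sub_const c))

theorem fderiv_shearFlow_apply (hv : Differentiable ℝ v) (c : ℝ) (x h : ℝ × ℝ) :
    fderiv ℝ (shearFlow v c) x h = ((0 : ℝ), deriv v (x.1 - c) * h.1) := by
  simp [(hasFDerivAt_shearFlow (hv _)).fderiv]

theorem hasDerivAt_shearFlow_time {a t : ℝ} {x : ℝ × ℝ}
    (hv : DifferentiableAt ℝ v (x.1 - a * t)) :
    HasDerivAt (fun s => shearFlow v (a * s) x) ((0 : ℝ), -a * deriv v (x.1 - a * t)) t := by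
  have hphase : HasDerivAt (fun s : ℝ => x.1 - a * s) (-a) t := by
    simpa using ((hasDerivAt_id t).const_mul a).const_sub x.1
  have hprofile := hv.hasDerivAt.comp t hphase
  rw [mul_comm] at hprofile
  exact (hasDerivAt_const t (0 : ℝ)).prodMk hprofile

end ShearFlow

section BoxIntegral

variable {E : Type*} [NormedAddCommGroup E] [NormedSpace ℝ E]

theorem Function.Periodic.intervalIntegral_comp_sub_eq {g : ℝ → E} {T : ℝ}
    (hg : Function.Periodic g T) (c : ℝ) :
    ∫ s in (0 : ℝ)..T, g (s - c) = ∫ s in (0 : ℝ)..T, g s := by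
  rw [intervalIntegral.integral_comp_sub_right, zero_sub, sub_eq_neg_add,
    hg.intervalIntegral_add_eq (-c) 0, zero_add]

theorem setIntegral_box_comp_fst (g : ℝ → E) :
    ∫ x in box, g x.1 = (2 * Real.pi) • ∫ s in (0 : ℝ)..(2 * Real.pi), g s := by
  have h2pi : (0 : ℝ) ≤ 2 * Real.pi := by positivity
  rw [box, ← Set.Icc_prod_Icc, Measure.volume_eq_prod, ← Measure.prod_restrict,
    integral_fun_fst, measureReal_restrict_apply_univ, Real.volume_real_Icc_of_le h2pi,
    sub_zero, intervalIntegral.integral_of_le h2pi, integral_Icc_eq_integral_Ioc]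

theorem setIntegral_box_comp_fst_sub {g : ℝ → E} (hg : Function.Periodic g (2 * Real.pi))
    (c : ℝ) :
    ∫ x in box, g (x.1 - c) = (2 * Real.pi) • ∫ s in (0 : ℝ)..(2 * Real.pi), g s := by
  rw [setIntegral_box_comp_fst (fun s => g (s - c)), hg.intervalIntegral_comp_sub_eq]

end BoxIntegral

theorem stmt_12_general (ν b₁ b₂ : ℝ)
    (v : ℝ → ℝ) (hv : ContDiff ℝ 1 v) (hper : Function.Periodic v (2 * Real.pi))
    (hmean : (∫ s in (0 : ℝ)..(2 * Real.pi), v s) = 0) :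
    let u : ℝ → ℝ × ℝ → ℝ × ℝ := fun t x => ((0 : ℝ), v (x.1 - b₁ * t))
    (∀ (t : ℝ) (x : ℝ × ℝ),
      (fderiv ℝ (u t) x (1, 0)).1 + (fderiv ℝ (u t) x (0, 1)).2 = 0) ∧
    (∀ t : ℝ, (∫ x in box, u t x) = 0) ∧
    (∀ (t : ℝ) (x : ℝ × ℝ), HasDerivAt (fun s => u s x)
      (-(b₁ • fderiv ℝ (u t) x (1, 0) + b₂ • fderiv ℝ (u t) x (0, 1))
        + ν • fderiv ℝ (fun y => fderiv ℝ (u t) y (0, 1)) x (0, 1)) t) ∧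
    (∀ t : ℝ, (∫ x in box, dot2 (u t x) (u t x))
        = ∫ x in box, dot2 (u 0 x) (u 0 x)) := by
  intro u
  have hdv : Differentiable ℝ v := hv.differentiable one_ne_zero
  have hgrad (t : ℝ) (x h : ℝ × ℝ) :
      fderiv ℝ (u t) x h = ((0 : ℝ), deriv v (x.1 - b₁ * t) * h.1) :=
    fderiv_shearFlow_apply hdv (b₁ * t) x h
  have henergy (t : ℝ) : ∫ x in box, dot2 (u t x) (u t x)
      = (2 * Real.pi) • ∫ s in (0 : ℝ)..(2 * Real.pi), v s * v s := by
    simpa [dot2, u] using setIntegral_box_comp_fst_sub (hper.mul hper) (b₁ * t)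
  refine ⟨fun t x => by simp [hgrad], fun t => ?_, fun t x => ?_,
    fun t => by rw [henergy, henergy]⟩
  · have hint : IntegrableOn (fun x : ℝ × ℝ => v (x.1 - b₁ * t)) box :=
      (hv.continuous.comp (continuous_fst.sub continuous_const)).continuousOn.integrableOn_compact
        isCompact_Icc
    rw [integral_pair (integrable_zero _ _ _) hint, setIntegral_box_comp_fst_sub hper, hmean]
    simp
  · refine (hasDerivAt_shearFlow_time (hdv (x.1 - b₁ * t))).congr_deriv ?_
    simp [hgrad]

/-- For `b₁ ≠ 0` and a periodic zero-mean `v`, the traveling wave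
`u(x,t) = (0, v(x₁ - b₁ t))` is a divergence-free zero-mean solution of
`u_t = -b·∇u + ν ∂²_{x₂} u` whose `L²` norm does not decay. -/
theorem stmt_12 (ν b₁ b₂ : ℝ) (hν : 0 < ν) (hb₁ : b₁ ≠ 0)
    (v : ℝ → ℝ) (hv : ContDiff ℝ 1 v) (hper : Function.Periodic v (2 * Real.pi))
    (hmean : (∫ s in (0 : ℝ)..(2 * Real.pi), v s) = 0) :
    let u : ℝ → ℝ × ℝ → ℝ × ℝ := fun t x => ((0 : ℝ), v (x.1 - b₁ * t))
    (∀ (t : ℝ) (x : ℝ × ℝ),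
      (fderiv ℝ (u t) x (1, 0)).1 + (fderiv ℝ (u t) x (0, 1)).2 = 0) ∧
    (∀ t : ℝ, (∫ x in box, u t x) = 0) ∧
    (∀ (t : ℝ) (x : ℝ × ℝ), HasDerivAt (fun s => u s x)
      (-(b₁ • fderiv ℝ (u t) x (1, 0) + b₂ • fderiv ℝ (u t) x (0, 1))
        + ν • fderiv ℝ (fun y => fderiv ℝ (u t) y (0, 1)) x (0, 1)) t) ∧
    (∀ t : ℝ, (∫ x in box, dot2 (u t x) (u t x))
        = ∫ x in box, dot2 (u 0 x) (u 0 x)) :=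
  stmt_12_general ν b₁ b₂ v hv hper hmean
end

section
/- Let h(α, β) := α² + (1/8)(αβc - √(1-α²))² on [0,1]×[0,1], where c is a constant with 1 ≤ c² ≤ 9/5. Then h(α, β) > 1/100 for all (α, β) ∈ [0,1]×[0,1]. -/
/-- For `1 ≤ c² ≤ 9/5`, the function
`h(α,β) = α² + (1/8)(αβc - √(1-α²))²` satisfies `h > 1/100` on `[0,1]²`. -/
theorem stmt_16 (c : ℝ) (hc : 0 < c) (hc1 : 1 ≤ c ^ 2) (hc2 : c ^ 2 ≤ 9 / 5)
    (α β : ℝ) (hα : α ∈ Set.Icc (0 : ℝ) 1) (hβ : β ∈ Set.Icc (0 : ℝ) 1) :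
    1 / 100 < α ^ 2 + (1 / 8) * (α * β * c - Real.sqrt (1 - α ^ 2)) ^ 2 := by
  obtain ⟨hα0, hα1⟩ := hα
  obtain ⟨hβ0, hβ1⟩ := hβ
  rcases le_or_gt (1/9 : ℝ) α with h | h
  · nlinarith [sq_nonneg (α * β * c - Real.sqrt (1 - α ^ 2))]
  · set s := Real.sqrt (1 - α ^ 2) with hs
    have hs0 : 0 ≤ s := Real.sqrt_nonneg _
    have hs2 : s ^ 2 = 1 - α ^ 2 := Real.sq_sqrt (by nlinarith)
    have hc135 : c ≤ 27/20 := by nlinarith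
    have habc : α * β * c ≤ 3/20 := by nlinarith [mul_nonneg hα0 hβ0, mul_nonneg (mul_nonneg hα0 hβ0) hc.le]
    have hsl : 99/100 ≤ s := by nlinarith
    nlinarith [sq_nonneg α]
end
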